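/- Consider the scalar linear coupled system ẏ_S = a·y_S + b·y_F, ẏ_F = c·y_S + d·y_F on [t̄, t̄+H] with initial data (ȳ_S, ȳ_F), and the decoupled system obtained by freezing the coupling variables at their initial values: ŷ_S' = a·ŷ_S + b·ȳ_F, ŷ_F' = c·ȳ_S + d·ŷ_F with the same initial data. Then ‖ŷ_S(t̄+H) - y_S(t̄+H)‖ ≤ |b|·K·e^(|a|·H)·H² and ‖ŷ_F(t̄+H) - y_F(t̄+H)‖ ≤ |c|·K'·e^(|d|·H)·H², where K = sup_{[t̄,t̄+H]} |ẏ_F| and K' = sup_{[t̄,t̄+H]} |ẏ_S|. -/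

import Mathlib

/-!
The splitting error `e = ŷ_S - y_S` solves `e' = a e + b (y_F(t̄) - y_F(t))` with `e(t̄) = 0`, so it
is driven by the error of extrapolating `y_F` by a constant. By the mean value theorem that forcing
is at most `|b| K (t - t̄) ≤ |b| K H`, and Grönwall's inequality turns a forcing of size `ε` into
an error of at most `ε H e^{|a| H}`. The fast component is symmetric.
-/

open Set Real

lemma gronwallBound_zero_le_mul_exp {k ε : ℝ} (hk : 0 ≤ k) (hε : 0 ≤ ε) (t : ℝ) :
    gronwallBound 0 k ε t ≤ ε * t * exp (k * t) := by
  rcases hk.eq_or_lt with rfl | hk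
  · simp [gronwallBound_K0]
  · have hexp : exp (k * t) - 1 ≤ k * t * exp (k * t) := by
      have := mul_le_mul_of_nonneg_right (one_sub_le_exp_neg (k * t)) (exp_pos (k * t)).le
      rw [← exp_add, neg_add_cancel, exp_zero] at this
      linarith
    simp only [gronwallBound_of_K_ne_0 hk.ne', zero_mul, zero_add]
    rw [div_mul_eq_mul_div, div_le_iff₀ hk]
    linarith [mul_le_mul_of_nonneg_left hexp hε]

lemma norm_le_mul_mul_exp_of_norm_deriv_le {E : Type*} [NormedAddCommGroup E] [NormedSpace ℝ E]
    {e e' : ℝ → E} {t₀ H k ε : ℝ} (hH : 0 ≤ H) (hk : 0 ≤ k)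
    (he : ∀ t ∈ Icc t₀ (t₀ + H), HasDerivAt e (e' t) t) (he0 : e t₀ = 0)
    (bound : ∀ t ∈ Icc t₀ (t₀ + H), ‖e' t‖ ≤ k * ‖e t‖ + ε) :
    ‖e (t₀ + H)‖ ≤ ε * H * exp (k * H) := by
  have hε : 0 ≤ ε := by
    have := bound t₀ ⟨le_rfl, by linarith⟩
    rw [he0, norm_zero, mul_zero, zero_add] at this
    exact (norm_nonneg _).trans this
  have hgronwall := norm_le_gronwallBound_of_norm_deriv_right_le
    (fun t ht => (he t ht).continuousAt.continuousWithinAt)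
    (fun t ht => (he t (Ico_subset_Icc_self ht)).hasDerivWithinAt)
    (by rw [he0, norm_zero]) (fun t ht => bound t (Ico_subset_Icc_self ht))
    (t₀ + H) ⟨by linarith, le_rfl⟩
  rw [add_sub_cancel_left] at hgronwall
  exact hgronwall.trans (gronwallBound_zero_le_mul_exp hk hε H)

lemma norm_sub_le_sSup_norm_deriv_mul {E : Type*} [NormedAddCommGroup E] [NormedSpace ℝ E]
    {f f' : ℝ → E} {a b : ℝ} (hf : ∀ t ∈ Icc a b, HasDerivAt f (f' t) t)
    (hf' : ContinuousOn f' (Icc a b)) :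
    ∀ t ∈ Icc a b, ‖f t - f a‖ ≤ sSup ((fun s => ‖f' s‖) '' Icc a b) * (t - a) :=
  norm_image_sub_le_of_norm_deriv_le_segment' (fun t ht => (hf t ht).hasDerivWithinAt)
    fun _ ht => le_csSup (isCompact_Icc.bddAbove_image (continuous_norm.comp_continuousOn hf'))
      (mem_image_of_mem _ (Ico_subset_Icc_self ht))

lemma abs_sub_le_of_frozen_coupling {t₀ H a b K : ℝ} {y z ŷ : ℝ → ℝ} (hH : 0 < H)
    (hy : ∀ t ∈ Icc t₀ (t₀ + H), HasDerivAt y (a * y t + b * z t) t)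
    (hŷ : ∀ t ∈ Icc t₀ (t₀ + H), HasDerivAt ŷ (a * ŷ t + b * z t₀) t)
    (h0 : ŷ t₀ = y t₀) (hz : ∀ t ∈ Icc t₀ (t₀ + H), |z t - z t₀| ≤ K * (t - t₀)) :
    |ŷ (t₀ + H) - y (t₀ + H)| ≤ |b| * K * exp (|a| * H) * H ^ 2 := by
  have hK : 0 ≤ K := by
    have := (abs_nonneg _).trans (hz (t₀ + H) ⟨by linarith, le_rfl⟩)
    rw [add_sub_cancel_left] at this
    exact nonneg_of_mul_nonneg_left this hH
  have bound : ∀ t ∈ Icc t₀ (t₀ + H),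
      ‖a * (ŷ t - y t) + b * (z t₀ - z t)‖ ≤ |a| * ‖ŷ t - y t‖ + |b| * K * H := by
    intro t ht
    have hforcing : |b| * |z t₀ - z t| ≤ |b| * K * H := by
      rw [abs_sub_comm, mul_assoc]
      gcongr
      exact (hz t ht).trans (by gcongr; linarith [ht.2])
    simp only [Real.norm_eq_abs]
    calc |a * (ŷ t - y t) + b * (z t₀ - z t)|
        ≤ |a| * |ŷ t - y t| + |b| * |z t₀ - z t| := by
          rw [← abs_mul, ← abs_mul]; exact abs_add_le _ _
      _ ≤ |a| * |ŷ t - y t| + |b| * K * H := by linarith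
  have herror := norm_le_mul_mul_exp_of_norm_deriv_le (e := fun t => ŷ t - y t)
    hH.le (abs_nonneg a)
    (fun t ht => ((hŷ t ht).sub (hy t ht)).congr_deriv (by ring)) (sub_eq_zero.mpr h0) bound
  rw [Real.norm_eq_abs] at herror
  linarith

/-- Fully-decoupled splitting estimate (Theorem 1 with `p = 1`) for a scalar
linear test system: freezing the coupling variables at their initial values
(constant extrapolation) yields an `O(H²)` splitting error. -/
theorem linear_test_system_splitting_error (tb H a b c d : ℝ) (hH : 0 < H)
    (yS yF yhS yhF : ℝ → ℝ)
    -- exact solution of the coupled linear system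
    (hyS : ∀ t ∈ Set.Icc tb (tb + H), HasDerivAt yS (a * yS t + b * yF t) t)
    (hyF : ∀ t ∈ Set.Icc tb (tb + H), HasDerivAt yF (c * yS t + d * yF t) t)
    -- decoupled system with frozen coupling variables, same initial data
    (hyhS : ∀ t ∈ Set.Icc tb (tb + H), HasDerivAt yhS (a * yhS t + b * yF tb) t)
    (hyhF : ∀ t ∈ Set.Icc tb (tb + H), HasDerivAt yhF (c * yS tb + d * yhF t) t)
    (hS0 : yhS tb = yS tb) (hF0 : yhF tb = yF tb)
    (K K' : ℝ)
    (hK : K = sSup ((fun t => |c * yS t + d * yF t|) '' Set.Icc tb (tb + H)))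
    (hK' : K' = sSup ((fun t => |a * yS t + b * yF t|) '' Set.Icc tb (tb + H))) :
    |yhS (tb + H) - yS (tb + H)| ≤ |b| * K * Real.exp (|a| * H) * H ^ 2 ∧
    |yhF (tb + H) - yF (tb + H)| ≤ |c| * K' * Real.exp (|d| * H) * H ^ 2 := by
  have hSc : ContinuousOn yS (Icc tb (tb + H)) :=
    fun t ht => (hyS t ht).continuousAt.continuousWithinAt
  have hFc : ContinuousOn yF (Icc tb (tb + H)) :=
    fun t ht => (hyF t ht).continuousAt.continuousWithinAt
  subst hK hK'
  constructor
  · exact abs_sub_le_of_frozen_coupling hH hyS hyhS hS0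
      (norm_sub_le_sSup_norm_deriv_mul hyF (by fun_prop))
  · exact abs_sub_le_of_frozen_coupling hH (fun t ht => (hyF t ht).congr_deriv (add_comm _ _))
      (fun t ht => (hyhF t ht).congr_deriv (add_comm _ _)) hF0
      (norm_sub_le_sSup_norm_deriv_mul hyS (by fun_prop))
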